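/- arXiv:2412.06514 — 2 statements merged into one kernel-verified Lean document; each statement's English description precedes it below -/
import Mathlib

section
/- Let ρ > 0, μ ≥ 0 and λ ∈ ℝ with λ + 2μ > 0, set c_p = √((λ+2μ)/ρ), let n ∈ ℝ³ be a unit vector, and let f : ℝ → ℝ be continuously differentiable. For the outgoing plane P-wave u(x,t) = f(t − (n·x)/c_p) n, the first-order Clayton–Engquist absorbing boundary condition with outward normal n is satisfied exactly with zero data: σ(u)·n + D ∂u/∂t = 0 at every point of ℝ³ × ℝ. -/
/-- Partial derivative of a scalar field on `ℝᵈ` in coordinate direction `i`. -/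
noncomputable def pd {d : ℕ} (f : (Fin d → ℝ) → ℝ) (i : Fin d) (x : Fin d → ℝ) : ℝ :=
  fderiv ℝ f x (Pi.single i 1)

/-- Isotropic stress tensor `σ(U) = λ (∇·U) I + 2 μ ε(U)` of a displacement field `U`,
where `ε(U) = (∇U + (∇U)ᵀ)/2` is the linearized strain. -/
noncomputable def stress {d : ℕ} (lam mu : ℝ) (U : (Fin d → ℝ) → Fin d → ℝ)
    (i j : Fin d) (x : Fin d → ℝ) : ℝ :=
  lam * (∑ k, pd (fun y => U y k) k x) * (if i = j then (1 : ℝ) else 0)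
    + mu * (pd (fun y => U y i) j x + pd (fun y => U y j) i x)

/-- Clayton–Engquist absorbing-boundary weight `D = √(ρ(λ+2μ)) n nᵀ + √(ρμ) (I − n nᵀ)`. -/
noncomputable def ceWeight {d : ℕ} (ρ lam mu : ℝ) (n : Fin d → ℝ) (i j : Fin d) : ℝ :=
  Real.sqrt (ρ * (lam + 2 * mu)) * (n i * n j)
    + Real.sqrt (ρ * mu) * ((if i = j then (1 : ℝ) else 0) - n i * n j)

/-! The outgoing P-wave has rank-one gradient `∇u = -(f'(θ)/c_p) n nᵀ`, hence traction
`σ(u) n = -(λ+2μ) f'(θ)/c_p n`. The normal `n` is an eigenvector of `D` whose eigenvalue is the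
P-impedance `√(ρ(λ+2μ)) = ρ c_p = (λ+2μ)/c_p`, so `D ∂ₜu = (λ+2μ) f'(θ)/c_p n` cancels the
traction exactly. -/

-- For `M ≤ 0` both sides are `0`, through `√` and `/ 0` junk values.
theorem Real.sqrt_mul_eq_div_sqrt_div {ρ : ℝ} (hρ : 0 < ρ) (M : ℝ) :
    √(ρ * M) = M / √(M / ρ) := by
  calc √(ρ * M) = √(ρ ^ 2 * (M / ρ)) := by field_simp
    _ = ρ * √(M / ρ) := by rw [Real.sqrt_mul (sq_nonneg ρ), Real.sqrt_sq hρ.le]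
    _ = ρ * ((M / ρ) / √(M / ρ)) := by rw [Real.div_sqrt]
    _ = M / √(M / ρ) := by field_simp

theorem hasFDerivAt_sum_mul_apply {d : ℕ} (n x : Fin d → ℝ) :
    HasFDerivAt (fun y : Fin d → ℝ => ∑ m, n m * y m)
      (∑ m, n m • ContinuousLinearMap.proj (R := ℝ) (φ := fun _ : Fin d => ℝ) m) x :=
  HasFDerivAt.fun_sum fun m _ => (hasFDerivAt_apply m x).const_mul (n m)

section PlaneWave

variable {d : ℕ} {n : Fin d → ℝ} {f : ℝ → ℝ} {t c : ℝ} {x : Fin d → ℝ}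

theorem pd_plane_wave (hf : DifferentiableAt ℝ f (t - (∑ m, n m * x m) / c)) (a : ℝ)
    (j : Fin d) :
    pd (fun y => f (t - (∑ m, n m * y m) / c) * a) j x
      = -(deriv f (t - (∑ m, n m * x m) / c) / c) * n j * a := by
  have hphase := ((hasFDerivAt_sum_mul_apply n x).mul_const c⁻¹).const_sub t
  simp only [← div_eq_mul_inv] at hphase
  have hwave : HasFDerivAt (fun y => f (t - (∑ m, n m * y m) / c) * a) _ x :=
    (hf.hasDerivAt.comp_hasFDerivAt x hphase).mul_const a
  rw [pd, hwave.fderiv]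
  simp only [neg_apply, smul_apply, sum_apply, ContinuousLinearMap.proj_apply, Pi.single_apply,
    smul_eq_mul, mul_ite, mul_one, mul_zero, Finset.sum_ite_eq', Finset.mem_univ, if_true]
  ring

theorem sum_stress_plane_wave_mul (hn : ∑ i, n i ^ 2 = 1)
    (hf : DifferentiableAt ℝ f (t - (∑ m, n m * x m) / c)) (lam mu : ℝ) (i : Fin d) :
    ∑ j, stress lam mu (fun y k => f (t - (∑ m, n m * y m) / c) * n k) i j x * n j
      = -(lam + 2 * mu) * (deriv f (t - (∑ m, n m * x m) / c) / c) * n i := by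
  simp only [stress, pd_plane_wave hf, neg_mul, mul_neg, Finset.sum_neg_distrib, add_mul,
    Finset.sum_add_distrib, mul_assoc, mul_left_comm _ (n i), ← Finset.mul_sum, ← sq, hn, ite_mul,
    one_mul, zero_mul, Finset.sum_ite_eq, Finset.mem_univ, if_true]
  ring

theorem sum_ceWeight_mul_self (hn : ∑ i, n i ^ 2 = 1) (ρ lam mu : ℝ) (i : Fin d) :
    ∑ j, ceWeight ρ lam mu n i j * n j = √(ρ * (lam + 2 * mu)) * n i := by
  simp only [ceWeight, add_mul, sub_mul, Finset.sum_add_distrib, Finset.sum_sub_distrib,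
    mul_assoc, ← Finset.mul_sum, ← sq, hn, ite_mul, one_mul, zero_mul, Finset.sum_ite_eq,
    Finset.mem_univ, if_true]
  ring

end PlaneWave

theorem plane_p_wave_absorbing_bc_general (ρ lam mu : ℝ) (hρ : 0 < ρ)
    (cp : ℝ) (hcp : cp = Real.sqrt ((lam + 2 * mu) / ρ))
    (n : Fin 3 → ℝ) (hn : ∑ i, n i ^ 2 = 1)
    (f : ℝ → ℝ) (hf : ContDiff ℝ 1 f) :
    ∀ (x : Fin 3 → ℝ) (t : ℝ) (i : Fin 3),
      (∑ j, stress lam mu (fun y k => f (t - (∑ m, n m * y m) / cp) * n k) i j x * n j)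
        + (∑ j, ceWeight ρ lam mu n i j *
            deriv (fun s => f (s - (∑ m, n m * x m) / cp) * n j) t) = 0 := by
  intro x t i
  have hθ := hf.differentiable one_ne_zero (t - (∑ m, n m * x m) / cp)
  simp only [sum_stress_plane_wave_mul hn hθ, deriv_mul_const_field, deriv_comp_sub_const]
  simp_rw [mul_left_comm _ (deriv f _), ← Finset.mul_sum, sum_ceWeight_mul_self hn, hcp,
    Real.sqrt_mul_eq_div_sqrt_div hρ]
  ring

/-- An outgoing plane P-wave `u(x,t) = f(t − (n·x)/c_p) n` satisfies the first-order
Clayton–Engquist absorbing boundary condition `σ(u)·n + D ∂u/∂t = 0` exactly, with outward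
normal `n`, at every point of `ℝ³ × ℝ`. -/
theorem plane_p_wave_absorbing_bc (ρ lam mu : ℝ) (hρ : 0 < ρ) (hmu : 0 ≤ mu)
    (hlm : 0 < lam + 2 * mu)
    (cp : ℝ) (hcp : cp = Real.sqrt ((lam + 2 * mu) / ρ))
    (n : Fin 3 → ℝ) (hn : ∑ i, n i ^ 2 = 1)
    (f : ℝ → ℝ) (hf : ContDiff ℝ 1 f) :
    ∀ (x : Fin 3 → ℝ) (t : ℝ) (i : Fin 3),
      (∑ j, stress lam mu (fun y k => f (t - (∑ m, n m * y m) / cp) * n k) i j x * n j)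
        + (∑ j, ceWeight ρ lam mu n i j *
            deriv (fun s => f (s - (∑ m, n m * x m) / cp) * n j) t) = 0 :=
  plane_p_wave_absorbing_bc_general ρ lam mu hρ cp hcp n hn f hf
end

section
/- Let ρ > 0, μ > 0 and λ ∈ ℝ with λ + 2μ > 0, set c_s = √(μ/ρ), let n, d ∈ ℝ³ be unit vectors with d·n = 0, and let f : ℝ → ℝ be continuously differentiable. For the outgoing plane S-wave u(x,t) = f(t − (n·x)/c_s) d, the first-order Clayton–Engquist absorbing boundary condition with outward normal n is satisfied exactly with zero data: σ(u)·n + D ∂u/∂t = 0 at every point of ℝ³ × ℝ. -/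
/-! A transverse plane wave `φ(n·x) d` has zero divergence, so its traction `σ n` is `μ φ' d`
(using `|n| = 1`); and `D` acts on the transverse velocity `f' d` as the scalar `√(ρμ)`. With
`φ' = -f'/c_s`, the two terms cancel because `√(ρμ) c_s = μ`. -/

open Finset

section PlaneWave

variable {N : ℕ}

lemma pd_comp_dotProduct {φ : ℝ → ℝ} {φ' : ℝ} (n x : Fin N → ℝ)
    (hφ : HasDerivAt φ φ' (∑ m, n m * x m)) (j : Fin N) :
    pd (fun y => φ (∑ m, n m * y m)) j x = φ' * n j := by
  have hdot : HasFDerivAt (fun y : Fin N → ℝ => ∑ m, n m * y m)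
      (∑ m, n m • ContinuousLinearMap.proj (R := ℝ) m) x :=
    HasFDerivAt.fun_sum fun m _ => (hasFDerivAt_apply m x).const_mul (n m)
  rw [pd, HasFDerivAt.fderiv (f := fun y => φ (∑ m, n m * y m)) (hφ.comp_hasFDerivAt x hdot)]
  simp [Pi.single_apply]

lemma sum_stress_planeWave_mul {φ : ℝ → ℝ} {φ' : ℝ} (lam mu : ℝ) (n d x : Fin N → ℝ)
    (hφ : HasDerivAt φ φ' (∑ m, n m * x m)) (hn : ∑ m, n m ^ 2 = 1)
    (hdn : ∑ m, d m * n m = 0) (i : Fin N) :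
    ∑ j, stress lam mu (fun y k => φ (∑ m, n m * y m) * d k) i j x * n j = mu * φ' * d i := by
  have hpd (k j : Fin N) : pd (fun y => φ (∑ m, n m * y m) * d k) j x = φ' * d k * n j :=
    (pd_comp_dotProduct n x (hφ.mul_const (d k)) j).trans (by ring)
  have hdiv : ∑ k, φ' * d k * n k = 0 := by simp_rw [mul_assoc, ← mul_sum, hdn, mul_zero]
  simp only [stress, hpd, hdiv, mul_zero, zero_mul, zero_add]
  calc ∑ j, mu * (φ' * d i * n j + φ' * d j * n i) * n j
      = mu * φ' * d i * ∑ j, n j ^ 2 + mu * φ' * n i * ∑ j, d j * n j := by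
        simp only [mul_sum, ← sum_add_distrib]
        exact sum_congr rfl fun j _ => by ring
    _ = mu * φ' * d i := by rw [hn, hdn]; ring

lemma sum_ceWeight_mul_of_orthogonal (ρ lam mu : ℝ) (n v : Fin N → ℝ)
    (hvn : ∑ j, v j * n j = 0) (i : Fin N) :
    ∑ j, ceWeight ρ lam mu n i j * v j = Real.sqrt (ρ * mu) * v i := by
  calc ∑ j, ceWeight ρ lam mu n i j * v j
      = (Real.sqrt (ρ * (lam + 2 * mu)) - Real.sqrt (ρ * mu)) * n i * ∑ j, v j * n j
          + Real.sqrt (ρ * mu) * ∑ j, (if i = j then v j else 0) := by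
        simp only [ceWeight, mul_sum, ← sum_add_distrib]
        refine sum_congr rfl fun j _ => ?_
        split_ifs <;> ring
    _ = Real.sqrt (ρ * mu) * v i := by simp [hvn]

end PlaneWave

lemma sqrt_mul_mul_sqrt_div {ρ mu : ℝ} (hρ : 0 < ρ) (hmu : 0 ≤ mu) :
    Real.sqrt (ρ * mu) * Real.sqrt (mu / ρ) = mu := by
  rw [← Real.sqrt_mul (by positivity), show ρ * mu * (mu / ρ) = mu * mu by field_simp,
    Real.sqrt_mul_self hmu]

theorem plane_s_wave_absorbing_bc_general (ρ lam mu : ℝ) (hρ : 0 < ρ) (hmu : 0 < mu)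
    (cs : ℝ) (hcs : cs = Real.sqrt (mu / ρ))
    (n d : Fin 3 → ℝ) (hn : ∑ i, n i ^ 2 = 1)
    (hdn : ∑ i, d i * n i = 0)
    (f : ℝ → ℝ) (hf : ContDiff ℝ 1 f) :
    ∀ (x : Fin 3 → ℝ) (t : ℝ) (i : Fin 3),
      (∑ j, stress lam mu (fun y k => f (t - (∑ m, n m * y m) / cs) * d k) i j x * n j)
        + (∑ j, ceWeight ρ lam mu n i j *
            deriv (fun s => f (s - (∑ m, n m * x m) / cs) * d j) t) = 0 := by
  intro x t i
  set s₀ := ∑ m, n m * x m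
  set F := deriv f (t - s₀ / cs)
  have hcs₀ : cs ≠ 0 := hcs ▸ (Real.sqrt_pos.2 (div_pos hmu hρ)).ne'
  have hprofile : HasDerivAt (fun s => f (t - s / cs)) (F * -cs⁻¹) s₀ :=
    ((hf.differentiable one_ne_zero _).hasDerivAt).comp s₀
      (by simpa using ((hasDerivAt_id s₀).div_const cs).const_sub t)
  have hvelocity : ∑ j, F * d j * n j = 0 := by simp_rw [mul_assoc, ← mul_sum, hdn, mul_zero]
  simp only [deriv_mul_const_field', deriv_comp_sub_const]
  have hspeed : Real.sqrt (ρ * mu) * cs = mu := hcs ▸ sqrt_mul_mul_sqrt_div hρ hmu.le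
  rw [sum_stress_planeWave_mul lam mu n d x hprofile hn hdn,
    sum_ceWeight_mul_of_orthogonal ρ lam mu n _ hvelocity]
  linear_combination (F * d i * cs⁻¹) * hspeed
    - (Real.sqrt (ρ * mu) * F * d i) * mul_inv_cancel₀ hcs₀

/-- An outgoing plane S-wave `u(x,t) = f(t − (n·x)/c_s) d`, with unit polarization `d ⊥ n`,
satisfies the first-order Clayton–Engquist absorbing boundary condition
`σ(u)·n + D ∂u/∂t = 0` exactly, with outward normal `n`, at every point of `ℝ³ × ℝ`. -/
theorem plane_s_wave_absorbing_bc (ρ lam mu : ℝ) (hρ : 0 < ρ) (hmu : 0 < mu)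
    (hlm : 0 < lam + 2 * mu)
    (cs : ℝ) (hcs : cs = Real.sqrt (mu / ρ))
    (n d : Fin 3 → ℝ) (hn : ∑ i, n i ^ 2 = 1) (hd : ∑ i, d i ^ 2 = 1)
    (hdn : ∑ i, d i * n i = 0)
    (f : ℝ → ℝ) (hf : ContDiff ℝ 1 f) :
    ∀ (x : Fin 3 → ℝ) (t : ℝ) (i : Fin 3),
      (∑ j, stress lam mu (fun y k => f (t - (∑ m, n m * y m) / cs) * d k) i j x * n j)
        + (∑ j, ceWeight ρ lam mu n i j *
            deriv (fun s => f (s - (∑ m, n m * x m) / cs) * d j) t) = 0 :=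
  plane_s_wave_absorbing_bc_general ρ lam mu hρ hmu cs hcs n d hn hdn f hf
end
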